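/- arXiv:2207.09116 — 2 statements merged into one kernel-verified Lean document; each statement's English description precedes it below -/
import Mathlib

section
/- Let V ∈ C¹ satisfy V_x + Λ(t,x) V_t = G(t,x) with |G(t,x)| ≤ C₃|V(t,x)|, |Λ_t(t,x)| ≤ C₂, and V(t,0) = 0 for t > 0. Fix (t',x') with t' > T₀ := L/λ₀ and 0 < x' < L, and let t₁(x), t₂(x) be the slow and fast characteristics through (t',x'), i.e. dt₁/dx = 1/λ₁(r(t₁,x),s(t₁,x)), dt₂/dx = 1/λ₂(r(t₂,x),s(t₂,x)) with t₁(x') = t₂(x') = t'. Define I(x) = (1/2)∫_{t₁(x)}^{t₂(x)} |V(t,x)|² dt for x ∈ [0,x']. Then I(0) = 0 and I'(x) ≤ (C₂/2 + C₃) I(x), and consequently, by Gronwall's inequality, I(x) ≡ 0 on [0,x'] and V(t',x') = 0. -/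
noncomputable section

/-- Partial derivative with respect to the first (time) variable. -/
def pdt (f : ℝ → ℝ → ℝ) (t x : ℝ) : ℝ := deriv (fun s => f s x) t

/-- Partial derivative with respect to the second (space) variable. -/
def pdx (f : ℝ → ℝ → ℝ) (t x : ℝ) : ℝ := deriv (fun y => f t y) x

/-- Squared L² norm on the interval [a,b]. -/
def L2sq (a b : ℝ) (f : ℝ → ℝ) : ℝ := ∫ t in a..b, (f t) ^ 2

/-- Squared H¹ norm on the interval [a,b]. -/
def H1sq (a b : ℝ) (f : ℝ → ℝ) : ℝ := L2sq a b f + L2sq a b (deriv f)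

/-- Squared H² norm on the interval [a,b]. -/
def H2sq (a b : ℝ) (f : ℝ → ℝ) : ℝ :=
  L2sq a b f + L2sq a b (deriv f) + L2sq a b (deriv (deriv f))

/-- The primitive ∫₀ᵗ α(s) ds of the external force coefficient. -/
def intAlpha (α : ℝ → ℝ) (t : ℝ) : ℝ := ∫ s in (0:ℝ)..t, α s

/-- Background velocity u_α(t) = e^{∫₀ᵗ α} ū. -/
def uBack (α : ℝ → ℝ) (ub t : ℝ) : ℝ := Real.exp (intAlpha α t) * ub

/-- Background Riemann invariant r_α(t) = u_α(t)/2 − c̄/(γ−1). -/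
def rBack (α : ℝ → ℝ) (ub cb γ t : ℝ) : ℝ := uBack α ub t / 2 - cb / (γ - 1)

/-- Background Riemann invariant s_α(t) = u_α(t)/2 + c̄/(γ−1). -/
def sBack (α : ℝ → ℝ) (ub cb γ t : ℝ) : ℝ := uBack α ub t / 2 + cb / (γ - 1)

/-!
The field `V` vanishes on the domain of determinacy `{x / λ₀ < t}` of its zero boundary
data. On the backward triangle of a point of that domain, let `max (V₁², V₂²) e^{-2cx}`, with
`c = |K| + 1` and `|G|² ≤ K |V|²`, attain its maximum at `(s, y)`. If the maximum were positive,
then `y > 0` and differentiating the larger component backwards along its own characteristic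
would give `c V_i² ≤ V_i G_i`, which is impossible since `c² > 2|K|`. Both characteristics
through `(t', x')` move with speed at least `λ₀`, so they stay in the domain of determinacy and
`I` vanishes on `[0, x']`; the differential inequality then holds with `I' = 0`. Since `I` is
differentiated at `x = 0` from both sides, the derivative there comes from `I(y) = O(y²)`, a
consequence of `V ∈ C¹` and `V(t, 0) = 0`.
-/

open Set Filter Topology

theorem IsLocalMaxOn.hasDerivAt_nonpos_of_Ici {f : ℝ → ℝ} {f' a : ℝ}
    (h : IsLocalMaxOn f (Ici a) a) (hf : HasDerivAt f f' a) : f' ≤ 0 := by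
  simpa using h.hasFDerivWithinAt_nonpos hf.hasFDerivAt.hasFDerivWithinAt (y := 1)
    (mem_posTangentConeAt_of_segment_subset
      ((segment_eq_Icc (by simp)).subset.trans Icc_subset_Ici_self))

theorem hasDerivAt_comp_line {f : ℝ → ℝ → ℝ} {t x : ℝ}
    (hf : DifferentiableAt ℝ (fun p : ℝ × ℝ => f p.1 p.2) (t, x)) (a b : ℝ) :
    HasDerivAt (fun ε => f (t + ε * a) (x + ε * b)) (a * pdt f t x + b * pdx f t x) 0 := by
  set D := fderiv ℝ (fun p : ℝ × ℝ => f p.1 p.2) (t, x)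
  have hF : HasFDerivAt (fun p : ℝ × ℝ => f p.1 p.2) D (t, x) := hf.hasFDerivAt
  have ht : HasDerivAt (fun s => f s x) (D (1, 0)) t :=
    (hF.comp_hasDerivAt t ((hasDerivAt_id' t).prodMk (hasDerivAt_const t x)) :)
  have hx : HasDerivAt (fun y => f t y) (D (0, 1)) x :=
    (hF.comp_hasDerivAt x ((hasDerivAt_const x t).prodMk (hasDerivAt_id' x)) :)
  have hline : HasDerivAt (fun ε : ℝ => (t + ε * a, x + ε * b)) (a, b) 0 := by
    refine HasDerivAt.prodMk ?_ ?_
    · simpa using ((hasDerivAt_id (0 : ℝ)).mul_const a).const_add t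
    · simpa using ((hasDerivAt_id (0 : ℝ)).mul_const b).const_add x
  have hab : ((a, b) : ℝ × ℝ) = a • ((1 : ℝ), (0 : ℝ)) + b • ((0 : ℝ), (1 : ℝ)) := by
    ext <;> simp
  rw [pdt, pdx, ht.deriv, hx.deriv, ← smul_eq_mul, ← smul_eq_mul, ← map_smul, ← map_smul,
    ← map_add, ← hab]
  exact hF.comp_hasDerivAt_of_eq 0 hline (by simp)

theorem mul_sq_le_of_backward_max {f : ℝ → ℝ → ℝ} {s y a c : ℝ}
    (hf : DifferentiableAt ℝ (fun p : ℝ × ℝ => f p.1 p.2) (s, y)) (hy : 0 < y)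
    (hmax : ∀ ε ∈ Icc 0 y, f (s - ε * a) (y - ε) ^ 2 * Real.exp (-(2 * c * (y - ε)))
      ≤ f s y ^ 2 * Real.exp (-(2 * c * y))) :
    c * f s y ^ 2 ≤ f s y * (pdx f s y + a * pdt f s y) := by
  have hφ : HasDerivAt (fun ε => f (s - ε * a) (y - ε)) (-(pdx f s y + a * pdt f s y)) 0 := by
    have := hasDerivAt_comp_line hf (-a) (-1)
    simp only [mul_neg, mul_one, ← sub_eq_add_neg] at this
    exact this.congr_deriv (by ring)
  have hw : HasDerivAt (fun ε : ℝ => -(2 * c * (y - ε))) (2 * c) 0 := by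
    simpa using (((hasDerivAt_id' (0 : ℝ)).const_sub y).const_mul (2 * c)).fun_neg
  have hD := IsLocalMaxOn.hasDerivAt_nonpos_of_Ici
    (by filter_upwards [Icc_mem_nhdsGE hy] with ε hε using by simpa using hmax ε hε)
    ((hφ.fun_pow 2).fun_mul hw.exp)
  simp only [Nat.cast_ofNat, zero_mul, sub_zero, Nat.add_one_sub_one, pow_one] at hD
  nlinarith [Real.exp_pos (-(2 * c * y))]

def dependenceTriangle (lam0 t₀ x₀ : ℝ) : Set (ℝ × ℝ) :=
  {p | 0 ≤ p.2 ∧ p.2 ≤ x₀ ∧ t₀ - (x₀ - p.2) / lam0 ≤ p.1 ∧ p.1 ≤ t₀}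

namespace dependenceTriangle

variable {lam0 t₀ x₀ : ℝ}

theorem isCompact (hlam0 : 0 < lam0) : IsCompact (dependenceTriangle lam0 t₀ x₀) := by
  refine ((isCompact_Icc (a := t₀ - x₀ / lam0) (b := t₀)).prod
    (isCompact_Icc (a := 0) (b := x₀))).of_isClosed_subset ?_ ?_
  · exact (isClosed_le continuous_const continuous_snd).inter
      ((isClosed_le continuous_snd continuous_const).inter
      ((isClosed_le (by fun_prop) continuous_fst).inter
        (isClosed_le continuous_fst continuous_const)))
  · rintro p ⟨h0, hx, ht, ht'⟩
    have : (x₀ - p.2) / lam0 ≤ x₀ / lam0 := by gcongr; linarith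
    exact ⟨⟨by linarith, ht'⟩, h0, hx⟩

theorem apex_mem (hx₀ : 0 ≤ x₀) : (t₀, x₀) ∈ dependenceTriangle lam0 t₀ x₀ :=
  ⟨hx₀, le_rfl, by simp, le_rfl⟩

theorem fst_pos (hlam0 : 0 < lam0) (ht₀ : x₀ / lam0 < t₀) {p : ℝ × ℝ}
    (hp : p ∈ dependenceTriangle lam0 t₀ x₀) : 0 < p.1 := by
  have : (x₀ - p.2) / lam0 ≤ x₀ / lam0 := by gcongr; linarith [hp.1]
  linarith [hp.2.2.1]

theorem backward_mem {p : ℝ × ℝ} (hp : p ∈ dependenceTriangle lam0 t₀ x₀) {a ε : ℝ}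
    (ha : 0 ≤ a) (ha' : a ≤ 1 / lam0) (hε : ε ∈ Icc 0 p.2) :
    (p.1 - ε * a, p.2 - ε) ∈ dependenceTriangle lam0 t₀ x₀ := by
  obtain ⟨h0, hx, ht, ht'⟩ := hp
  have h1 : ε * a ≤ ε / lam0 := by
    simpa [div_eq_mul_one_div ε] using mul_le_mul_of_nonneg_left ha' hε.1
  have h2 : (x₀ - (p.2 - ε)) / lam0 = (x₀ - p.2) / lam0 + ε / lam0 := by ring
  refine ⟨by linarith [hε.2], by linarith [hε.1], ?_, by nlinarith [hε.1]⟩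
  simp only
  linarith

end dependenceTriangle

theorem mul_sq_le_of_isMaxOn_dependenceTriangle {lam0 t₀ x₀ s y a c : ℝ} {M : ℝ × ℝ → ℝ}
    {f : ℝ → ℝ → ℝ} (hf : DifferentiableAt ℝ (fun p : ℝ × ℝ => f p.1 p.2) (s, y))
    (hfM : ∀ p : ℝ × ℝ, f p.1 p.2 ^ 2 ≤ M p) (hMf : M (s, y) = f s y ^ 2)
    (hp : (s, y) ∈ dependenceTriangle lam0 t₀ x₀) (hy : 0 < y)
    (hmax : IsMaxOn (fun p => M p * Real.exp (-(2 * c * p.2))) (dependenceTriangle lam0 t₀ x₀)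
      (s, y))
    (ha : 0 ≤ a) (ha' : a ≤ 1 / lam0) :
    c * f s y ^ 2 ≤ f s y * (pdx f s y + a * pdt f s y) :=
  mul_sq_le_of_backward_max hf hy fun ε hε => calc
    _ ≤ M (s - ε * a, y - ε) * Real.exp (-(2 * c * (y - ε))) :=
      mul_le_mul_of_nonneg_right (hfM _) (Real.exp_pos _).le
    _ ≤ M (s, y) * Real.exp (-(2 * c * y)) :=
      hmax (dependenceTriangle.backward_mem hp ha ha' hε)
    _ = _ := by rw [hMf]

theorem mul_lt_of_sq_le {F G K : ℝ} (hF : F ≠ 0) (hG : G ^ 2 ≤ 2 * |K| * F ^ 2) :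
    F * G < (|K| + 1) * F ^ 2 := by
  by_contra! h
  have hF2 : 0 < F ^ 2 := by positivity
  have hK := abs_nonneg K
  have : ((|K| + 1) * F ^ 2) ^ 2 ≤ (F * G) ^ 2 := pow_le_pow_left₀ (by positivity) h 2
  nlinarith

theorem eq_zero_of_div_lt {L lam0 K : ℝ} {l₁ l₂ V₁ V₂ G₁ G₂ : ℝ → ℝ → ℝ} (hlam0 : 0 < lam0)
    (hl₁ : ∀ t ≥ 0, ∀ x ∈ Icc 0 L, lam0 ≤ l₁ t x) (hl₂ : ∀ t ≥ 0, ∀ x ∈ Icc 0 L, lam0 ≤ l₂ t x)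
    (hV₁ : Differentiable ℝ (fun p : ℝ × ℝ => V₁ p.1 p.2))
    (hV₂ : Differentiable ℝ (fun p : ℝ × ℝ => V₂ p.1 p.2))
    (heq₁ : ∀ t ≥ 0, ∀ x ∈ Icc 0 L, pdx V₁ t x + 1 / l₁ t x * pdt V₁ t x = G₁ t x)
    (heq₂ : ∀ t ≥ 0, ∀ x ∈ Icc 0 L, pdx V₂ t x + 1 / l₂ t x * pdt V₂ t x = G₂ t x)
    (hG : ∀ t ≥ 0, ∀ x ∈ Icc 0 L, G₁ t x ^ 2 + G₂ t x ^ 2 ≤ K * (V₁ t x ^ 2 + V₂ t x ^ 2))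
    (hV₀ : ∀ t > 0, V₁ t 0 = 0 ∧ V₂ t 0 = 0)
    {t₀ x₀ : ℝ} (hx₀ : x₀ ∈ Icc 0 L) (ht₀ : x₀ / lam0 < t₀) :
    V₁ t₀ x₀ = 0 ∧ V₂ t₀ x₀ = 0 := by
  set M : ℝ × ℝ → ℝ := fun p => max (V₁ p.1 p.2 ^ 2) (V₂ p.1 p.2 ^ 2)
  have hM : Continuous M := by
    have := hV₁.continuous
    have := hV₂.continuous
    fun_prop
  obtain ⟨⟨s, y⟩, hp, hmax⟩ := (dependenceTriangle.isCompact hlam0).exists_isMaxOn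
    ⟨_, dependenceTriangle.apex_mem hx₀.1⟩ (hM.mul (by fun_prop :
      Continuous fun p : ℝ × ℝ => Real.exp (-(2 * (|K| + 1) * p.2)))).continuousOn
  have hs : 0 < s := dependenceTriangle.fst_pos hlam0 ht₀ hp
  suffices hMsy : M (s, y) ≤ 0 by
    have := nonpos_of_mul_nonpos_left ((hmax (dependenceTriangle.apex_mem hx₀.1)).trans
      (mul_nonpos_of_nonpos_of_nonneg hMsy (Real.exp_pos _).le)) (Real.exp_pos _)
    simp only [M, max_le_iff] at this
    exact ⟨pow_eq_zero_iff two_ne_zero |>.1 (this.1.antisymm (sq_nonneg _)),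
      pow_eq_zero_iff two_ne_zero |>.1 (this.2.antisymm (sq_nonneg _))⟩
  by_contra! hMpos
  have hy : 0 < y := by
    refine hp.1.lt_of_ne fun hy => hMpos.ne' ?_
    obtain rfl : y = 0 := hy.symm
    simp [M, hV₀ s hs]
  have hyL : y ∈ Icc 0 L := ⟨hp.1, hp.2.1.trans hx₀.2⟩
  have hGM : G₁ s y ^ 2 + G₂ s y ^ 2 ≤ 2 * |K| * M (s, y) := by
    have := mul_le_mul_of_nonneg_right (le_abs_self K)
      (by positivity : 0 ≤ V₁ s y ^ 2 + V₂ s y ^ 2)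
    nlinarith [hG s hs.le y hyL, le_max_left (V₁ s y ^ 2) (V₂ s y ^ 2),
      le_max_right (V₁ s y ^ 2) (V₂ s y ^ 2), abs_nonneg K]
  have not_max_component : ∀ {f g l : ℝ → ℝ → ℝ},
      Differentiable ℝ (fun p : ℝ × ℝ => f p.1 p.2) → (∀ p : ℝ × ℝ, f p.1 p.2 ^ 2 ≤ M p) →
      M (s, y) = f s y ^ 2 → lam0 ≤ l s y → pdx f s y + 1 / l s y * pdt f s y = g s y →
      g s y ^ 2 ≤ G₁ s y ^ 2 + G₂ s y ^ 2 → False := by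
    intro f g l hf hfM hMf hl hfeq hg
    have hf0 : f s y ≠ 0 := fun h0 => by simp [hMf, h0] at hMpos
    have hback := mul_sq_le_of_isMaxOn_dependenceTriangle (hf (s, y)) hfM hMf hp hy hmax
      (by have := hlam0.trans_le hl; positivity) (one_div_le_one_div_of_le hlam0 hl)
    rw [hfeq] at hback
    exact (mul_lt_of_sq_le hf0 (by rw [← hMf]; linarith)).not_ge hback
  rcases le_total (V₂ s y ^ 2) (V₁ s y ^ 2) with h | h
  · exact not_max_component hV₁ (fun p => le_max_left _ _) (max_eq_left h) (hl₁ s hs.le y hyL)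
      (heq₁ s hs.le y hyL) (le_add_of_nonneg_right (sq_nonneg _))
  · exact not_max_component hV₂ (fun p => le_max_right _ _) (max_eq_right h) (hl₂ s hs.le y hyL)
      (heq₂ s hs.le y hyL) (le_add_of_nonneg_left (sq_nonneg _))

theorem div_lt_characteristic {lam0 x' : ℝ} {l : ℝ → ℝ → ℝ} {τ : ℝ → ℝ} (hlam0 : 0 < lam0)
    (hl : ∀ t > 0, ∀ x ∈ Icc 0 x', lam0 ≤ l t x)
    (hτ : ∀ x ∈ Icc 0 x', HasDerivAt τ (1 / l (τ x) x) x) (hx' : x' / lam0 < τ x') :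
    ∀ x ∈ Icc 0 x', x / lam0 < τ x := by
  set m := τ x' - x' / lam0
  have hm : 0 < m := sub_pos.2 hx'
  have hB : ∀ u ∈ Icc 0 x', HasDerivAt (fun u => τ (x' - u) - (x' - u) / lam0)
      (1 / lam0 - 1 / l (τ (x' - u)) (x' - u)) u := by
    intro u hu
    have hrefl := (hasDerivAt_id' u).const_sub x'
    have := ((hτ (x' - u) ⟨by linarith [hu.2], by linarith [hu.1]⟩).comp u hrefl).sub
      (hrefl.div_const lam0)
    exact this.congr_deriv (by ring)
  -- fencing needs a strict inequality where the curves touch, hence the barrier `m e^{-u}`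
  have key : ∀ u ∈ Icc 0 x', m * Real.exp (-u) ≤ τ (x' - u) - (x' - u) / lam0 := by
    refine image_le_of_deriv_right_lt_deriv_boundary' (f' := fun u => -(m * Real.exp (-u)))
      (by fun_prop) (fun u _ => ?_) (by simp [m])
      (fun u hu => (hB u hu).continuousAt.continuousWithinAt)
      (fun u hu => (hB u (Ico_subset_Icc_self hu)).hasDerivWithinAt) ?_
    · simpa using ((hasDerivAt_neg' u).exp.const_mul m).hasDerivWithinAt
    · intro u hu htouch
      have hpos : 0 < τ (x' - u) := by
        have : 0 ≤ (x' - u) / lam0 := div_nonneg (by linarith [hu.2]) hlam0.le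
        nlinarith [Real.exp_pos (-u)]
      have := one_div_le_one_div_of_le hlam0
        (hl _ hpos (x' - u) ⟨by linarith [hu.2], by linarith [hu.1]⟩)
      nlinarith [Real.exp_pos (-u)]
  intro x hx
  have := key (x' - x) ⟨by linarith [hx.2], by linarith [hx.1]⟩
  rw [sub_sub_cancel] at this
  nlinarith [Real.exp_pos (-(x' - x))]

theorem exists_abs_le_mul_abs_of_eq_zero {f : ℝ → ℝ → ℝ}
    (hf : ContDiff ℝ 1 (fun p : ℝ × ℝ => f p.1 p.2)) {a b : ℝ}
    (h0 : ∀ t ∈ Icc a b, f t 0 = 0) :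
    ∃ M, ∀ t ∈ Icc a b, ∀ y ∈ Icc (-1 : ℝ) 1, |f t y| ≤ M * |y| := by
  obtain ⟨M, hM⟩ := hf.locallyLipschitz.locallyLipschitzOn.exists_lipschitzOnWith_of_compact
    (isCompact_Icc.prod (isCompact_Icc (a := (-1 : ℝ)) (b := 1)))
  refine ⟨M, fun t ht y hy => ?_⟩
  simpa [h0 t ht, Prod.dist_eq, Real.dist_eq] using
    hM.dist_le_mul (t, y) ⟨ht, hy⟩ (t, 0) ⟨ht, by norm_num⟩

theorem sq_le_mul_sq_of_abs_le {v M y : ℝ} (h : |v| ≤ M * |y|) : v ^ 2 ≤ M ^ 2 * y ^ 2 := by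
  simpa only [sq_abs, mul_pow] using pow_le_pow_left₀ (abs_nonneg v) h 2

theorem hasDerivAt_zero_of_abs_le_sq {f : ℝ → ℝ} {C : ℝ}
    (hf : ∀ᶠ y in 𝓝 0, |f y| ≤ C * y ^ 2) : HasDerivAt f 0 0 := by
  have hf0 : f 0 = 0 := by simpa using hf.self_of_nhds
  have hO : f =O[𝓝 0] fun y => y ^ 2 :=
    Asymptotics.IsBigO.of_bound C (by simpa [Real.norm_eq_abs] using hf)
  rw [hasDerivAt_iff_isLittleO_nhds_zero]
  simpa [hf0] using hO.trans_isLittleO (Asymptotics.isLittleO_pow_id one_lt_two)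
theorem hasDerivAt_integral_sq_add_sq {V₁ V₂ : ℝ → ℝ → ℝ}
    (hV₁ : ContDiff ℝ 1 (fun p : ℝ × ℝ => V₁ p.1 p.2))
    (hV₂ : ContDiff ℝ 1 (fun p : ℝ × ℝ => V₂ p.1 p.2))
    (hV₀ : ∀ t > 0, V₁ t 0 = 0 ∧ V₂ t 0 = 0) {a b : ℝ → ℝ} (ha : ContinuousAt a 0)
    (hb : ContinuousAt b 0) (ha₀ : 0 < a 0) (hb₀ : 0 < b 0) :
    HasDerivAt (fun y => ∫ t in a y..b y, (V₁ t y ^ 2 + V₂ t y ^ 2)) 0 0 := by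
  set α := min (a 0) (b 0) / 2
  set β := max (a 0) (b 0) + 1
  have hα : 0 < α := by positivity
  obtain ⟨M₁, hM₁⟩ := exists_abs_le_mul_abs_of_eq_zero hV₁ (a := α) (b := β)
    fun t ht => (hV₀ t (hα.trans_le ht.1)).1
  obtain ⟨M₂, hM₂⟩ := exists_abs_le_mul_abs_of_eq_zero hV₂ (a := α) (b := β)
    fun t ht => (hV₀ t (hα.trans_le ht.1)).2
  have hαmin : α < min (a 0) (b 0) := half_lt_self (lt_min ha₀ hb₀)
  have hIoo : ∀ z, min (a 0) (b 0) ≤ z → z ≤ max (a 0) (b 0) → Ioo α β ∈ 𝓝 z :=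
    fun z h₁ h₂ => Ioo_mem_nhds (by linarith) (by linarith)
  refine hasDerivAt_zero_of_abs_le_sq (C := (M₁ ^ 2 + M₂ ^ 2) * (β - α)) ?_
  filter_upwards [ha (hIoo _ (min_le_left _ _) (le_max_left _ _)),
    hb (hIoo _ (min_le_right _ _) (le_max_right _ _)),
    Ioo_mem_nhds (neg_lt_zero.2 one_pos) one_pos] with y hay hby hy
  have hW : ∀ t ∈ uIoc (a y) (b y), ‖V₁ t y ^ 2 + V₂ t y ^ 2‖ ≤ (M₁ ^ 2 + M₂ ^ 2) * y ^ 2 := by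
    intro t ht
    have htI : t ∈ Icc α β :=
      uIcc_subset_Icc (Ioo_subset_Icc_self hay) (Ioo_subset_Icc_self hby) (uIoc_subset_uIcc ht)
    have h₁ := sq_le_mul_sq_of_abs_le (hM₁ t htI y (Ioo_subset_Icc_self hy))
    have h₂ := sq_le_mul_sq_of_abs_le (hM₂ t htI y (Ioo_subset_Icc_self hy))
    rw [Real.norm_eq_abs, abs_of_nonneg (by positivity)]
    linarith
  have hba : |b y - a y| ≤ β - α :=
    abs_sub_le_iff.2 ⟨by linarith [hay.1, hby.2], by linarith [hay.2, hby.1]⟩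
  calc |∫ t in a y..b y, (V₁ t y ^ 2 + V₂ t y ^ 2)|
      ≤ (M₁ ^ 2 + M₂ ^ 2) * y ^ 2 * |b y - a y| :=
        intervalIntegral.norm_integral_le_of_norm_le_const hW
    _ ≤ (M₁ ^ 2 + M₂ ^ 2) * y ^ 2 * (β - α) := by gcongr
    _ = (M₁ ^ 2 + M₂ ^ 2) * (β - α) * y ^ 2 := by ring

theorem intervalIntegral_sq_add_sq_eq_zero {V₁ V₂ : ℝ → ℝ → ℝ} {a b c x : ℝ}
    (hV : ∀ t > c, V₁ t x = 0 ∧ V₂ t x = 0) (ha : c < a) (hb : c < b) :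
    ∫ t in a..b, (V₁ t x ^ 2 + V₂ t x ^ 2) = 0 := by
  rw [intervalIntegral.integral_congr (g := fun _ => (0 : ℝ)) fun t ht => ?_,
    intervalIntegral.integral_zero]
  obtain ⟨h₁, h₂⟩ := hV t ((lt_min ha hb).trans_le ht.1)
  simp [h₁, h₂]

theorem le_sq_mul_of_sqrt_le {A B C : ℝ} (hA : 0 ≤ A) (hB : 0 ≤ B) (h : √A ≤ C * √B) :
    A ≤ C ^ 2 * B := calc
  A = √A ^ 2 := (Real.sq_sqrt hA).symm
  _ ≤ (C * √B) ^ 2 := pow_le_pow_left₀ (Real.sqrt_nonneg A) h 2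
  _ = C ^ 2 * B := by rw [mul_pow, Real.sq_sqrt hB]

theorem characteristic_energy_gronwall_general
    (L lam0 C₂ C₃ : ℝ) (hlam0 : 0 < lam0)
    (l1 l2 : ℝ → ℝ → ℝ)
    -- 0 < λ₀ ≤ λ₁ < λ₂ on [0,∞)×[0,L]
    (hl : ∀ t ≥ (0:ℝ), ∀ x ∈ Set.Icc (0:ℝ) L, lam0 ≤ l1 t x ∧ l1 t x < l2 t x)
    (V1 V2 G1 G2 : ℝ → ℝ → ℝ)
    (hV1reg : ContDiff ℝ 1 (fun p : ℝ × ℝ => V1 p.1 p.2))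
    (hV2reg : ContDiff ℝ 1 (fun p : ℝ × ℝ => V2 p.1 p.2))
    -- V_x + Λ V_t = G with Λ = diag(1/λ₁, 1/λ₂)
    (heq : ∀ t ≥ (0:ℝ), ∀ x ∈ Set.Icc (0:ℝ) L,
      pdx V1 t x + (1 / l1 t x) * pdt V1 t x = G1 t x ∧
      pdx V2 t x + (1 / l2 t x) * pdt V2 t x = G2 t x)
    -- |G(t,x)| ≤ C₃ |V(t,x)|
    (hG : ∀ t ≥ (0:ℝ), ∀ x ∈ Set.Icc (0:ℝ) L,
      Real.sqrt ((G1 t x) ^ 2 + (G2 t x) ^ 2)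
        ≤ C₃ * Real.sqrt ((V1 t x) ^ 2 + (V2 t x) ^ 2))
    -- V(t,0) = 0 for t > 0
    (hV0 : ∀ t > (0:ℝ), V1 t 0 = 0 ∧ V2 t 0 = 0)
    (t' x' : ℝ) (ht' : t' > L / lam0) (hx'0 : 0 < x') (hx'L : x' < L)
    -- the slow and fast characteristics through (t',x')
    (t₁ t₂ : ℝ → ℝ)
    (ht₁ : ∀ x ∈ Set.Icc (0:ℝ) x', HasDerivAt t₁ (1 / l1 (t₁ x) x) x)
    (ht₂ : ∀ x ∈ Set.Icc (0:ℝ) x', HasDerivAt t₂ (1 / l2 (t₂ x) x) x)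
    (ht₁' : t₁ x' = t') (ht₂' : t₂ x' = t')
    (I : ℝ → ℝ)
    (hI : I = fun x => (1 / 2) * ∫ t in t₁ x..t₂ x, ((V1 t x) ^ 2 + (V2 t x) ^ 2)) :
    I 0 = 0 ∧
    (∀ x ∈ Set.Ico (0:ℝ) x', ∃ I' : ℝ, HasDerivAt I I' x ∧ I' ≤ (C₂ / 2 + C₃) * I x) ∧
    (∀ x ∈ Set.Icc (0:ℝ) x', I x = 0) ∧
    V1 t' x' = 0 ∧ V2 t' x' = 0 := by
  have hl₂ : ∀ t ≥ (0:ℝ), ∀ x ∈ Icc 0 L, lam0 ≤ l2 t x :=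
    fun t ht x hx => (hl t ht x hx).1.trans (hl t ht x hx).2.le
  have hvanish : ∀ t, ∀ x ∈ Icc 0 L, x / lam0 < t → V1 t x = 0 ∧ V2 t x = 0 :=
    fun t x hx ht => eq_zero_of_div_lt hlam0 (fun t ht x hx => (hl t ht x hx).1) hl₂
      (hV1reg.differentiable one_ne_zero) (hV2reg.differentiable one_ne_zero)
      (fun t ht x hx => (heq t ht x hx).1) (fun t ht x hx => (heq t ht x hx).2)
      (fun t ht x hx => le_sq_mul_of_sqrt_le (by positivity) (by positivity) (hG t ht x hx))
      hV0 hx ht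
  have hIcc : Icc 0 x' ⊆ Icc 0 L := Icc_subset_Icc_right hx'L.le
  have hT : x' / lam0 < t' := (div_lt_div_of_pos_right hx'L hlam0).trans ht'
  have hchar₁ := div_lt_characteristic hlam0
    (fun t ht x hx => (hl t ht.le x (hIcc hx)).1) ht₁ (ht₁' ▸ hT)
  have hchar₂ := div_lt_characteristic hlam0
    (fun t ht x hx => hl₂ t ht.le x (hIcc hx)) ht₂ (ht₂' ▸ hT)
  have hIzero : ∀ x ∈ Icc 0 x', I x = 0 := fun x hx => by
    simp only [hI, intervalIntegral_sq_add_sq_eq_zero (fun t => hvanish t x (hIcc hx))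
      (hchar₁ x hx) (hchar₂ x hx), mul_zero]
  have h0 : (0 : ℝ) ∈ Icc 0 x' := ⟨le_rfl, hx'0.le⟩
  refine ⟨hIzero 0 h0, fun x hx => ⟨0, ?_, ?_⟩, hIzero, hvanish t' x' ⟨hx'0.le, hx'L.le⟩ hT⟩
  · rcases hx.1.eq_or_lt with rfl | hx0
    · have := hasDerivAt_integral_sq_add_sq hV1reg hV2reg hV0 (ht₁ 0 h0).continuousAt
        (ht₂ 0 h0).continuousAt (by simpa using hchar₁ 0 h0) (by simpa using hchar₂ 0 h0)
      simpa [hI] using this.const_mul (1 / 2 : ℝ)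
    · exact (hasDerivAt_const x 0).congr_of_eventuallyEq <| by
        filter_upwards [Ioo_mem_nhds hx0 hx.2] with y hy using hIzero y (Ioo_subset_Icc_self hy)
  · rw [hIzero x (Ico_subset_Icc_self hx), mul_zero]

/-- the characteristic energy functional I(x) along the slow and fast
characteristics through (t',x') vanishes at x = 0, satisfies the differential
inequality I' ≤ (C₂/2 + C₃) I, hence vanishes identically by Gronwall's inequality,
and therefore V(t',x') = 0. -/
theorem characteristic_energy_gronwall
    (L lam0 C₂ C₃ : ℝ) (hL : 0 < L) (hlam0 : 0 < lam0) (hC₂ : 0 < C₂) (hC₃ : 0 < C₃)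
    (l1 l2 : ℝ → ℝ → ℝ)
    -- 0 < λ₀ ≤ λ₁ < λ₂ on [0,∞)×[0,L]
    (hl : ∀ t ≥ (0:ℝ), ∀ x ∈ Set.Icc (0:ℝ) L, lam0 ≤ l1 t x ∧ l1 t x < l2 t x)
    (V1 V2 G1 G2 : ℝ → ℝ → ℝ)
    (hV1reg : ContDiff ℝ 1 (fun p : ℝ × ℝ => V1 p.1 p.2))
    (hV2reg : ContDiff ℝ 1 (fun p : ℝ × ℝ => V2 p.1 p.2))
    -- V_x + Λ V_t = G with Λ = diag(1/λ₁, 1/λ₂)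
    (heq : ∀ t ≥ (0:ℝ), ∀ x ∈ Set.Icc (0:ℝ) L,
      pdx V1 t x + (1 / l1 t x) * pdt V1 t x = G1 t x ∧
      pdx V2 t x + (1 / l2 t x) * pdt V2 t x = G2 t x)
    -- |G(t,x)| ≤ C₃ |V(t,x)|
    (hG : ∀ t ≥ (0:ℝ), ∀ x ∈ Set.Icc (0:ℝ) L,
      Real.sqrt ((G1 t x) ^ 2 + (G2 t x) ^ 2)
        ≤ C₃ * Real.sqrt ((V1 t x) ^ 2 + (V2 t x) ^ 2))
    -- |Λ_t(t,x)| ≤ C₂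
    (hΛt : ∀ t ≥ (0:ℝ), ∀ x ∈ Set.Icc (0:ℝ) L,
      max |pdt (fun t x => 1 / l1 t x) t x| |pdt (fun t x => 1 / l2 t x) t x| ≤ C₂)
    -- V(t,0) = 0 for t > 0
    (hV0 : ∀ t > (0:ℝ), V1 t 0 = 0 ∧ V2 t 0 = 0)
    (t' x' : ℝ) (ht' : t' > L / lam0) (hx'0 : 0 < x') (hx'L : x' < L)
    -- the slow and fast characteristics through (t',x')
    (t₁ t₂ : ℝ → ℝ)
    (ht₁ : ∀ x ∈ Set.Icc (0:ℝ) x', HasDerivAt t₁ (1 / l1 (t₁ x) x) x)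
    (ht₂ : ∀ x ∈ Set.Icc (0:ℝ) x', HasDerivAt t₂ (1 / l2 (t₂ x) x) x)
    (ht₁' : t₁ x' = t') (ht₂' : t₂ x' = t')
    (I : ℝ → ℝ)
    (hI : I = fun x => (1 / 2) * ∫ t in t₁ x..t₂ x, ((V1 t x) ^ 2 + (V2 t x) ^ 2)) :
    I 0 = 0 ∧
    (∀ x ∈ Set.Ico (0:ℝ) x', ∃ I' : ℝ, HasDerivAt I I' x ∧ I' ≤ (C₂ / 2 + C₃) * I x) ∧
    (∀ x ∈ Set.Icc (0:ℝ) x', I x = 0) ∧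
    V1 t' x' = 0 ∧ V2 t' x' = 0 :=
  characteristic_energy_gronwall_general L lam0 C₂ C₃ hlam0 l1 l2 hl V1 V2 G1 G2 hV1reg hV2reg heq
    hG hV0 t' x' ht' hx'0 hx'L t₁ t₂ ht₁ ht₂ ht₁' ht₂' I hI
end
end

section
/- (L² energy estimate) Let m be a smooth time-periodic solution of m_x + Λ m_t = (α(t)/2) Λ̃ m on [T₀,T₀+1]×[0,L] satisfying the a priori bound sup_{x∈[0,L]} ‖m‖_{H²([T₀,T₀+1])} < δ with δ small. Then (d/dx)(1/2)‖m(·,x)‖²_{L²([T₀,T₀+1])} ≤ (1/2)(sup|Λ_t| + sup|α| sup|Λ̃|) ‖m(·,x)‖²_{L²([T₀,T₀+1])} ≤ (1/2) C₅ ‖m(·,x)‖²_{L²([T₀,T₀+1])}, where C₅ = C₄ + C₂C₃ with C₂ = 2(ū−c̄)^{−1}, C₃ = max_{t≥0}{|α|,|α'|,|α''|}, and C₄ the uniform bound on |Λ_t|. (The time-periodicity of m in t with period 1 is used to integrate by parts without boundary terms.) -/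
noncomputable section

open MeasureTheory intervalIntegral Set

namespace L2energyAux

variable {m : ℝ → ℝ → ℝ}

lemma hd_t (h : ContDiff ℝ (⊤ : ℕ∞) (fun p : ℝ × ℝ => m p.1 p.2)) (t x : ℝ) :
    HasDerivAt (fun s => m s x) (pdt m t x) t := by
  have h1 : HasDerivAt (fun s : ℝ => (s, x)) ((1:ℝ), (0:ℝ)) t :=
    (hasDerivAt_id t).prodMk (hasDerivAt_const t x)
  have h2 := (h.differentiable (by simp) (t, x)).hasFDerivAt.comp_hasDerivAt t h1
  have h3 : pdt m t x = fderiv ℝ (fun p : ℝ × ℝ => m p.1 p.2) (t, x) ((1:ℝ), (0:ℝ)) := h2.deriv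
  rw [h3]
  exact h2

lemma pdt_cont (h : ContDiff ℝ (⊤ : ℕ∞) (fun p : ℝ × ℝ => m p.1 p.2)) :
    Continuous (fun p : ℝ × ℝ => pdt m p.1 p.2) := by
  have hc : Continuous (fun p : ℝ × ℝ =>
      fderiv ℝ (fun p : ℝ × ℝ => m p.1 p.2) p ((1:ℝ), (0:ℝ))) :=
    (h.continuous_fderiv (by simp)).clm_apply continuous_const
  refine hc.congr fun p => ?_
  have h1 : HasDerivAt (fun s : ℝ => (s, p.2)) ((1:ℝ), (0:ℝ)) p.1 :=
    (hasDerivAt_id p.1).prodMk (hasDerivAt_const p.1 p.2)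
  have h2 := (h.differentiable (by simp) (p.1, p.2)).hasFDerivAt.comp_hasDerivAt p.1 h1
  exact h2.deriv.symm

lemma hd_x (h : ContDiff ℝ (⊤ : ℕ∞) (fun p : ℝ × ℝ => m p.1 p.2)) (t x : ℝ) :
    HasDerivAt (fun y => m t y) (pdx m t x) x := by
  have h1 : HasDerivAt (fun y : ℝ => (t, y)) ((0:ℝ), (1:ℝ)) x :=
    (hasDerivAt_const x t).prodMk (hasDerivAt_id x)
  have h2 := (h.differentiable (by simp) (t, x)).hasFDerivAt.comp_hasDerivAt x h1
  have h3 : pdx m t x = fderiv ℝ (fun p : ℝ × ℝ => m p.1 p.2) (t, x) ((0:ℝ), (1:ℝ)) := h2.deriv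
  rw [h3]
  exact h2

lemma pdx_cont (h : ContDiff ℝ (⊤ : ℕ∞) (fun p : ℝ × ℝ => m p.1 p.2)) :
    Continuous (fun p : ℝ × ℝ => pdx m p.1 p.2) := by
  have hc : Continuous (fun p : ℝ × ℝ =>
      fderiv ℝ (fun p : ℝ × ℝ => m p.1 p.2) p ((0:ℝ), (1:ℝ))) :=
    (h.continuous_fderiv (by simp)).clm_apply continuous_const
  refine hc.congr fun p => ?_
  have h1 : HasDerivAt (fun y : ℝ => (p.1, y)) ((0:ℝ), (1:ℝ)) p.2 :=
    (hasDerivAt_const p.2 p.1).prodMk (hasDerivAt_id p.2)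
  have h2 := (h.differentiable (by simp) (p.1, p.2)).hasFDerivAt.comp_hasDerivAt p.2 h1
  exact h2.deriv.symm

lemma L2sq_nonneg (a b : ℝ) (hab : a ≤ b) (f : ℝ → ℝ) : 0 ≤ L2sq a b f :=
  intervalIntegral.integral_nonneg hab fun s _ => sq_nonneg _

/-- Sobolev-type sup bound: (f t)² ≤ 2 (‖f‖² + ‖f'‖²) on a unit interval. -/
lemma sobolev_sq (f : ℝ → ℝ) (hf : ∀ s, HasDerivAt f (deriv f s) s)
    (hfc : Continuous f) (hf'c : Continuous (deriv f))
    (a : ℝ) (t : ℝ) (ht : t ∈ Set.Icc a (a + 1)) :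
    (f t) ^ 2 ≤ 2 * (L2sq a (a + 1) f + L2sq a (a + 1) (deriv f)) := by
  have hab : a ≤ a + 1 := by linarith
  have hφc : Continuous fun s => (f s) ^ 2 := hfc.pow 2
  obtain ⟨s₀, hs₀, hmin⟩ := (isCompact_Icc (a := a) (b := a + 1)).exists_isMinOn
    (Set.nonempty_Icc.2 hab) (hφc.continuousOn)
  have h1 : (f s₀) ^ 2 ≤ ∫ s in a..(a+1), (f s) ^ 2 := by
    have : ∫ s in a..(a+1), (f s₀) ^ 2 ≤ ∫ s in a..(a+1), (f s) ^ 2 := by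
      apply intervalIntegral.integral_mono_on hab (intervalIntegrable_const)
        (hφc.intervalIntegrable a (a+1))
      intro s hs; exact hmin hs
    simpa using this
  have hderiv : ∀ s, HasDerivAt (fun u => (f u) ^ 2) (2 * f s * deriv f s) s := by
    intro s
    have h2 : HasDerivAt (fun u => f u * f u) (deriv f s * f s + f s * deriv f s) s :=
      (hf s).mul (hf s)
    have h3 : (fun u => (f u) ^ 2) = fun u => f u * f u := by funext u; ring
    rw [h3]; convert h2 using 1; ring
  have h2 : ∫ s in s₀..t, (2 * f s * deriv f s) = (f t) ^ 2 - (f s₀) ^ 2 := by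
    apply intervalIntegral.integral_eq_sub_of_hasDerivAt (fun s _ => hderiv s)
    exact ((continuous_const.mul hfc).mul hf'c).intervalIntegrable _ _
  have h3 : ∫ s in s₀..t, (2 * f s * deriv f s)
      ≤ ∫ s in a..(a+1), ((f s) ^ 2 + (deriv f s) ^ 2) := by
    have habs : ∀ s, |2 * f s * deriv f s| ≤ (f s) ^ 2 + (deriv f s) ^ 2 := by
      intro s
      have h4 : |2 * f s * deriv f s| = 2 * (|f s| * |deriv f s|) := by
        rw [abs_mul, abs_mul, abs_two]; ring
      nlinarith [sq_nonneg (|f s| - |deriv f s|), sq_abs (f s), sq_abs (deriv f s),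
        abs_nonneg (f s), abs_nonneg (deriv f s)]
    calc ∫ s in s₀..t, (2 * f s * deriv f s)
        ≤ |∫ s in s₀..t, (2 * f s * deriv f s)| := le_abs_self _
      _ = |∫ s in (min s₀ t)..(max s₀ t), (2 * f s * deriv f s)| := by
          rcases le_total s₀ t with h | h
          · rw [min_eq_left h, max_eq_right h]
          · rw [min_eq_right h, max_eq_left h, intervalIntegral.integral_symm, abs_neg]
      _ ≤ ∫ s in (min s₀ t)..(max s₀ t), |2 * f s * deriv f s| := by
          apply intervalIntegral.abs_integral_le_integral_abs (min_le_max)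
      _ ≤ ∫ s in a..(a+1), |2 * f s * deriv f s| := by
          apply intervalIntegral.integral_mono_interval (le_min hs₀.1 ht.1)
            min_le_max (max_le hs₀.2 ht.2)
          · filter_upwards with s using abs_nonneg _
          · exact (((continuous_const.mul hfc).mul hf'c).abs).intervalIntegrable _ _
      _ ≤ ∫ s in a..(a+1), ((f s) ^ 2 + (deriv f s) ^ 2) := by
          apply intervalIntegral.integral_mono_on hab
            ((((continuous_const.mul hfc).mul hf'c).abs).intervalIntegrable _ _)
            (((hfc.pow 2).add (hf'c.pow 2)).intervalIntegrable _ _)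
          intro s _; exact habs s
  have h5 : ∫ s in a..(a+1), ((f s) ^ 2 + (deriv f s) ^ 2)
      = L2sq a (a+1) f + L2sq a (a+1) (deriv f) := by
    unfold L2sq
    exact intervalIntegral.integral_add ((hfc.pow 2).intervalIntegrable _ _)
      ((hf'c.pow 2).intervalIntegrable _ _)
  have hL2f : (0:ℝ) ≤ L2sq a (a+1) f := L2sq_nonneg a (a+1) hab f
  have hL2f' : (0:ℝ) ≤ L2sq a (a+1) (deriv f) := L2sq_nonneg a (a+1) hab (deriv f)
  unfold L2sq at *
  linarith [h1, h2, h3]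

lemma intAlpha_hasDerivAt {α : ℝ → ℝ} (hc : Continuous α) (t : ℝ) :
    HasDerivAt (intAlpha α) (α t) t := by
  unfold intAlpha
  exact intervalIntegral.integral_hasDerivAt_right
    (hc.intervalIntegrable 0 t) (hc.stronglyMeasurableAtFilter _ _) hc.continuousAt

lemma intAlpha_periodic {α : ℝ → ℝ} (hc : Continuous α) (hper : Function.Periodic α 1)
    (hzero : intAlpha α 1 = 0) (t : ℝ) : intAlpha α (t + 1) = intAlpha α t := by
  have h1 : intAlpha α (t + 1) = intAlpha α t + ∫ s in t..(t+1), α s := by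
    unfold intAlpha
    rw [← intervalIntegral.integral_add_adjacent_intervals
      (hc.intervalIntegrable 0 t) (hc.intervalIntegrable t (t+1))]
  have h2 : (∫ s in t..(t+1), α s) = ∫ s in (0:ℝ)..(0+1), α s :=
    hper.intervalIntegral_add_eq t 0
  rw [h1, h2]
  simpa [intAlpha] using hzero

lemma uBack_hasDerivAt {α : ℝ → ℝ} (hc : Continuous α) (ub t : ℝ) :
    HasDerivAt (uBack α ub) (α t * uBack α ub t) t := by
  unfold uBack
  have h := ((intAlpha_hasDerivAt hc t).exp).mul_const ub
  exact h.congr_deriv (by ring)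

lemma uBack_continuous {α : ℝ → ℝ} (hc : Continuous α) (ub : ℝ) :
    Continuous (uBack α ub) := by
  unfold uBack intAlpha
  exact ((intervalIntegral.continuous_primitive
    (fun a b => hc.intervalIntegrable a b) 0).rexp).mul continuous_const

lemma uBack_ge {α : ℝ → ℝ} (hnn : ∀ t ≥ (0:ℝ), 0 ≤ intAlpha α t) (ub : ℝ) (hub : 0 ≤ ub)
    {t : ℝ} (ht : 0 ≤ t) : ub ≤ uBack α ub t := by
  unfold uBack
  nlinarith [Real.one_le_exp (hnn t ht), Real.exp_pos (intAlpha α t)]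

lemma coeff_bounds (k c l1 l2 : ℝ) (hk : 0 < k) (hc : 0 < c)
    (h1 : k - k*c/(3*k+4*c) ≤ l1) (h2 : k + c ≤ l2) :
    0 < l1 ∧ 0 < l2 ∧ 3/2*(1/l1) + 1/2*(1/l2) ≤ 2/k ∧ 1/2*(1/l1) + 3/2*(1/l2) ≤ 2/k := by
  have hden : 0 < 3*k+4*c := by linarith
  have hkε : 0 < k - k*c/(3*k+4*c) := by
    rw [sub_pos, div_lt_iff₀ hden]; nlinarith
  have hl1 : 0 < l1 := lt_of_lt_of_le hkε h1
  have hl2 : 0 < l2 := by linarith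
  have hA : 1/l1 ≤ 1/(k - k*c/(3*k+4*c)) := one_div_le_one_div_of_le hkε h1
  have hB : 1/l2 ≤ 1/(k + c) := one_div_le_one_div_of_le (by linarith) h2
  have hne2 : k + c ≠ 0 := by positivity
  have hne3 : k ≠ 0 := ne_of_gt hk
  have hne4 : 3*k+4*c ≠ 0 := ne_of_gt hden
  have e0 : k - k*c/(3*k+4*c) = 3*k*(k+c)/(3*k+4*c) := by
    field_simp; ring
  have key1 : 3/2*(1/(k - k*c/(3*k+4*c))) + 1/2*(1/(k+c)) = 2/k := by
    rw [e0, one_div_div]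
    field_simp
    ring
  have key2 : 1/2*(1/(k - k*c/(3*k+4*c))) + 3/2*(1/(k+c)) ≤ 2/k := by
    rw [← sub_nonneg]
    have e : 2/k - (1/2*(1/(k - k*c/(3*k+4*c))) + 3/2*(1/(k+c)))
        = (8*c)/(6*k*(k+c)) := by
      rw [e0, one_div_div]
      field_simp
      ring
    rw [e]; positivity
  exact ⟨hl1, hl2, by linarith, by linarith⟩

lemma alg_main (k C₃ u v aa A B : ℝ) (hu : 0 < u) (hv : 0 < v) (hk : 0 < k)
    (h1 : 3/2*u + 1/2*v ≤ 2/k) (h2 : 1/2*u + 3/2*v ≤ 2/k) (haC : |aa| ≤ C₃) :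
    aa/2 * (u*(A+B)*A + v*(A+B)*B) ≤ C₃/k * (A^2+B^2) := by
  have hC₃ : 0 ≤ C₃ := le_trans (abs_nonneg _) haC
  set T := u*(A+B)*A + v*(A+B)*B with hT
  have hAB : |A*B| ≤ (A^2+B^2)/2 := by
    rw [abs_mul]
    nlinarith [sq_nonneg (|A| - |B|), sq_abs A, sq_abs B]
  have hTle : |T| ≤ 2/k * (A^2+B^2) := by
    rw [abs_le]
    constructor
    · nlinarith [neg_abs_le (A*B),
        mul_le_mul_of_nonneg_left hAB (le_of_lt hu),
        mul_le_mul_of_nonneg_left hAB (le_of_lt hv),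
        mul_le_mul_of_nonneg_right h1 (sq_nonneg A),
        mul_le_mul_of_nonneg_right h2 (sq_nonneg B),
        mul_le_mul_of_nonneg_left (neg_abs_le (A*B)) (le_of_lt hu),
        mul_le_mul_of_nonneg_left (neg_abs_le (A*B)) (le_of_lt hv)]
    · nlinarith [le_abs_self (A*B),
        mul_le_mul_of_nonneg_left hAB (le_of_lt hu),
        mul_le_mul_of_nonneg_left hAB (le_of_lt hv),
        mul_le_mul_of_nonneg_right h1 (sq_nonneg A),
        mul_le_mul_of_nonneg_right h2 (sq_nonneg B),
        mul_le_mul_of_nonneg_left (le_abs_self (A*B)) (le_of_lt hu),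
        mul_le_mul_of_nonneg_left (le_abs_self (A*B)) (le_of_lt hv)]
  calc aa/2 * T ≤ |aa/2 * T| := le_abs_self _
    _ = |aa|/2 * |T| := by rw [abs_mul, abs_div, abs_two]
    _ ≤ C₃/2 * (2/k * (A^2+B^2)) := by
        apply mul_le_mul (by linarith [haC]) hTle (abs_nonneg _) (by positivity)
    _ = C₃/k * (A^2+B^2) := by field_simp

lemma L2_hasDerivAt (h : ContDiff ℝ (⊤ : ℕ∞) (fun p : ℝ × ℝ => m p.1 p.2)) (a b x : ℝ) :
    HasDerivAt (fun y => L2sq a b (fun t => m t y))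
      (∫ t in a..b, 2 * m t x * pdx m t x) x := by
  have hmc : Continuous (fun p : ℝ × ℝ => m p.1 p.2) := h.continuous
  have hG : Continuous (fun p : ℝ × ℝ => 2 * m p.1 p.2 * pdx m p.1 p.2) :=
    (continuous_const.mul hmc).mul (pdx_cont h)
  have hK : IsCompact ((Set.uIcc a b) ×ˢ (Metric.closedBall x 1)) :=
    isCompact_uIcc.prod (isCompact_closedBall x 1)
  obtain ⟨C, hC⟩ := hK.exists_bound_of_continuousOn hG.continuousOn
  have main := intervalIntegral.hasDerivAt_integral_of_dominated_loc_of_deriv_le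
    (F := fun y t => (m t y)^2) (F' := fun y t => 2 * m t y * pdx m t y)
    (x₀ := x) (a := a) (b := b) (μ := volume) (bound := fun _ => C)
    (s := Metric.ball x 1) (Metric.ball_mem_nhds x one_pos)
    (Filter.Eventually.of_forall fun y =>
      ((hmc.comp (continuous_id.prodMk continuous_const)).pow 2).aestronglyMeasurable)
    (((hmc.comp (continuous_id.prodMk continuous_const)).pow 2).intervalIntegrable a b)
    ((hG.comp (continuous_id.prodMk continuous_const)).aestronglyMeasurable)
    (Filter.Eventually.of_forall fun t ht y hy => by
      have htI : t ∈ Set.uIcc a b := Set.uIoc_subset_uIcc ht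
      have hyI : y ∈ Metric.closedBall x 1 := Metric.ball_subset_closedBall hy
      exact hC (t, y) (Set.mk_mem_prod htI hyI))
    intervalIntegrable_const
    (Filter.Eventually.of_forall fun t ht y hy => by
      have h1 := (hd_x h t y).mul (hd_x h t y)
      have h2 : (fun z => (m t z)^2) = fun z => m t z * m t z := by funext z; ring
      rw [h2]
      exact h1.congr_deriv (by ring))
  exact main.2

/-- Integration by parts for the transport term, using 1-periodicity. -/
lemma ibp_comp (T₀ : ℝ) (f f' lf l' : ℝ → ℝ)
    (hf : ∀ s, HasDerivAt f (f' s) s) (hfc : Continuous f) (hf'c : Continuous f')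
    (hl : ∀ s, HasDerivAt lf (l' s) s) (hlc : Continuous lf) (hl'c : Continuous l')
    (hlne : ∀ s ∈ Set.uIcc T₀ (T₀+1), lf s ≠ 0)
    (hfper : f (T₀+1) = f T₀) (hlper : lf (T₀+1) = lf T₀) :
    ∫ t in T₀..(T₀+1), (1/lf t) * (2 * f t * f' t)
      = ∫ t in T₀..(T₀+1), (l' t/(lf t)^2) * (f t)^2 := by
  have hu : ∀ s ∈ Set.uIcc T₀ (T₀+1),
      HasDerivAt (fun t => 1/lf t) (-(l' s)/(lf s)^2) s := by
    intro s hs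
    simp only [one_div]; exact (hl s).inv (hlne s hs)
  have hv : ∀ s ∈ Set.uIcc T₀ (T₀+1),
      HasDerivAt (fun t => (f t)^2) (2 * f s * f' s) s := by
    intro s _
    have h1 := (hf s).mul (hf s)
    have h2 : (fun t => (f t)^2) = fun t => f t * f t := by funext t; ring
    rw [h2]; exact h1.congr_deriv (by ring)
  have hu'int : IntervalIntegrable (fun s => -(l' s)/(lf s)^2) volume T₀ (T₀+1) := by
    apply ContinuousOn.intervalIntegrable
    exact (hl'c.continuousOn.neg).div ((hlc.continuousOn).pow 2)
      (fun s hs => pow_ne_zero 2 (hlne s hs))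
  have hv'int : IntervalIntegrable (fun s => 2 * f s * f' s) volume T₀ (T₀+1) :=
    ((continuous_const.mul hfc).mul hf'c).intervalIntegrable _ _
  have hibp := integral_mul_deriv_eq_deriv_mul hu hv hu'int hv'int
  rw [hibp]
  have hb : (fun t => 1/lf t) (T₀+1) * (fun t => (f t)^2) (T₀+1)
      = (fun t => 1/lf t) T₀ * (fun t => (f t)^2) T₀ := by
    simp only [hfper, hlper]
  rw [hb]
  have hneg : (∫ s in T₀..(T₀+1), -(l' s) / (lf s) ^ 2 * (f s) ^ 2)
      = -∫ t in T₀..(T₀+1), (l' t/(lf t)^2) * (f t)^2 := by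
    rw [← intervalIntegral.integral_neg]
    congr 1; funext s; ring
  rw [hneg]
  ring

end L2energyAux

open L2energyAux

set_option maxHeartbeats 1000000 in
/-- L² energy estimate: for a smooth time-periodic solution of
m_x + Λ m_t = (α/2) Λ̃ m with small H² a-priori bound,
(d/dx)(1/2)‖m‖²_{L²} ≤ (1/2) C₅ ‖m‖²_{L²} with C₅ = C₄ + C₂C₃, C₂ = 2(ū−c̄)⁻¹. -/
theorem L2_energy_estimate
    (a γ L T₀ ρb ub cb C₃ : ℝ)
    (ha : 0 < a) (hγ : 1 < γ) (hL : 0 < L) (hT₀ : 0 ≤ T₀)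
    (hρb : 0 < ρb) (hcb : cb = Real.sqrt (a * γ) * ρb ^ ((γ - 1) / 2)) (hsup : ub > cb)
    (α : ℝ → ℝ) (hα : ContDiff ℝ 2 α) (hαper : Function.Periodic α 1)
    (hαnn : ∀ t ≥ (0:ℝ), 0 ≤ intAlpha α t) (hαzero : intAlpha α 1 = 0)
    (hC₃ : ∀ t ≥ (0:ℝ), |α t| ≤ C₃ ∧ |deriv α t| ≤ C₃ ∧ |deriv (deriv α) t| ≤ C₃) :
    ∃ δ₀ > (0:ℝ), ∀ δ : ℝ, 0 < δ → δ ≤ δ₀ →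
      ∀ m1 m2 l1 l2 : ℝ → ℝ → ℝ,
        l1 = (fun t x => (γ + 1) / 2 * m1 t x - (γ - 3) / 2 * m2 t x + uBack α ub t - cb) →
        l2 = (fun t x => (γ + 1) / 2 * m2 t x - (γ - 3) / 2 * m1 t x + uBack α ub t + cb) →
        -- m is smooth
        ContDiff ℝ (⊤ : ℕ∞) (fun p : ℝ × ℝ => m1 p.1 p.2) →
        ContDiff ℝ (⊤ : ℕ∞) (fun p : ℝ × ℝ => m2 p.1 p.2) →
        -- m is time-periodic with period 1
        (∀ t x : ℝ, m1 (t + 1) x = m1 t x ∧ m2 (t + 1) x = m2 t x) →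
        -- m solves m_x + Λ m_t = (α/2) Λ̃ m
        (∀ t : ℝ, ∀ x ∈ Set.Icc (0:ℝ) L,
          pdx m1 t x + (1 / l1 t x) * pdt m1 t x
              = α t / 2 * (1 / l1 t x) * (m1 t x + m2 t x) ∧
          pdx m2 t x + (1 / l2 t x) * pdt m2 t x
              = α t / 2 * (1 / l2 t x) * (m1 t x + m2 t x)) →
        -- the a-priori H² bound of size δ
        (∀ x ∈ Set.Icc (0:ℝ) L,
          Real.sqrt (H2sq T₀ (T₀ + 1) (fun t => m1 t x)
            + H2sq T₀ (T₀ + 1) (fun t => m2 t x)) < δ) →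
        -- C₄: any uniform bound on |Λ_t|
        ∀ C₄ : ℝ,
          (∀ t ∈ Set.Icc T₀ (T₀ + 1), ∀ x ∈ Set.Icc (0:ℝ) L,
            max |pdt (fun t x => 1 / l1 t x) t x| |pdt (fun t x => 1 / l2 t x) t x| ≤ C₄) →
          ∀ x ∈ Set.Icc (0:ℝ) L,
            deriv (fun y => 1 / 2 * (L2sq T₀ (T₀ + 1) (fun t => m1 t y)
                + L2sq T₀ (T₀ + 1) (fun t => m2 t y))) x
              ≤ 1 / 2 * (C₄ + 2 * (ub - cb)⁻¹ * C₃)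
                  * (L2sq T₀ (T₀ + 1) (fun t => m1 t x)
                    + L2sq T₀ (T₀ + 1) (fun t => m2 t x)) := by
  have hcbpos : 0 < cb := by rw [hcb]; positivity
  have hub : 0 < ub := lt_trans hcbpos hsup
  obtain ⟨k, hkdef⟩ : ∃ k : ℝ, k = ub - cb := ⟨_, rfl⟩
  have hk : 0 < k := by rw [hkdef]; linarith
  obtain ⟨Cγ, hCγdef⟩ : ∃ c : ℝ, c = (γ+1)/2 + |γ-3|/2 := ⟨_, rfl⟩
  have hCγ : 0 < Cγ := by
    have : 0 < (γ+1)/2 := by linarith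
    have := abs_nonneg (γ-3)
    rw [hCγdef]; linarith
  obtain ⟨ε, hεdef⟩ : ∃ e : ℝ, e = k*cb/(3*k+4*cb) := ⟨_, rfl⟩
  have hεpos : 0 < ε := by rw [hεdef]; positivity
  have hεcb : ε ≤ cb := by
    rw [hεdef, div_le_iff₀ (by positivity)]
    nlinarith
  refine ⟨ε/(2*Cγ), div_pos hεpos (by linarith), ?_⟩
  intro δ hδ hδ₀ m1 m2 l1 l2 hl1 hl2 hm1 hm2 hper hPDE hap C₄ hC₄ x hx
  subst hl1; subst hl2
  have hαc : Continuous α := hα.continuous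
  have hTb : T₀ ≤ T₀ + 1 := by linarith
  have huIcc : Set.uIcc T₀ (T₀+1) = Set.Icc T₀ (T₀+1) := Set.uIcc_of_le hTb
  -- continuity facts
  have hc1 : Continuous (fun p : ℝ×ℝ => m1 p.1 p.2) := hm1.continuous
  have hc2 : Continuous (fun p : ℝ×ℝ => m2 p.1 p.2) := hm2.continuous
  have hc1x : Continuous (fun t => m1 t x) := hc1.comp (continuous_id.prodMk continuous_const)
  have hc2x : Continuous (fun t => m2 t x) := hc2.comp (continuous_id.prodMk continuous_const)
  have hpdt1c : Continuous (fun t => pdt m1 t x) :=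
    (pdt_cont hm1).comp (continuous_id.prodMk continuous_const)
  have hpdt2c : Continuous (fun t => pdt m2 t x) :=
    (pdt_cont hm2).comp (continuous_id.prodMk continuous_const)
  have hder1 : deriv (fun t => m1 t x) = fun s => pdt m1 s x :=
    funext fun s => (hd_t hm1 s x).deriv
  have hder2 : deriv (fun t => m2 t x) = fun s => pdt m2 s x :=
    funext fun s => (hd_t hm2 s x).deriv
  -- sup bounds via Sobolev
  have hH2 : H2sq T₀ (T₀ + 1) (fun t => m1 t x) + H2sq T₀ (T₀ + 1) (fun t => m2 t x) < δ^2 := by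
    have h := hap x hx
    have := Real.sqrt_lt' (x := H2sq T₀ (T₀ + 1) (fun t => m1 t x)
        + H2sq T₀ (T₀ + 1) (fun t => m2 t x)) (y := δ) hδ
    exact this.1 h
  have hH2nn : ∀ f : ℝ → ℝ, L2sq T₀ (T₀+1) f + L2sq T₀ (T₀+1) (deriv f) ≤ H2sq T₀ (T₀+1) f := by
    intro f
    have := L2sq_nonneg T₀ (T₀+1) hTb (deriv (deriv f))
    unfold H2sq; linarith
  have hH2nn' : ∀ f : ℝ → ℝ, 0 ≤ H2sq T₀ (T₀+1) f := by
    intro f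
    have h1 := L2sq_nonneg T₀ (T₀+1) hTb f
    have h2 := L2sq_nonneg T₀ (T₀+1) hTb (deriv f)
    have h3 := L2sq_nonneg T₀ (T₀+1) hTb (deriv (deriv f))
    unfold H2sq; linarith
  have hsup1 : ∀ t ∈ Set.Icc T₀ (T₀+1), |m1 t x| ≤ 2*δ := by
    intro t ht
    have hs := sobolev_sq (fun t => m1 t x)
      (fun s => by rw [hder1]; exact hd_t hm1 s x)
      hc1x (by rw [hder1]; exact hpdt1c) T₀ t ht
    have h1 := hH2nn (fun t => m1 t x)
    have h2 := hH2nn' (fun t => m2 t x)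
    nlinarith [sq_abs (m1 t x), abs_nonneg (m1 t x)]
  have hsup2 : ∀ t ∈ Set.Icc T₀ (T₀+1), |m2 t x| ≤ 2*δ := by
    intro t ht
    have hs := sobolev_sq (fun t => m2 t x)
      (fun s => by rw [hder2]; exact hd_t hm2 s x)
      hc2x (by rw [hder2]; exact hpdt2c) T₀ t ht
    have h1 := hH2nn (fun t => m2 t x)
    have h2 := hH2nn' (fun t => m1 t x)
    nlinarith [sq_abs (m2 t x), abs_nonneg (m2 t x)]
  -- perturbation bound
  have hpert : ∀ t ∈ Set.Icc T₀ (T₀+1), ∀ A B : ℝ, |A| ≤ 2*δ → |B| ≤ 2*δ →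
      |(γ+1)/2 * A - (γ-3)/2 * B| ≤ ε := by
    intro t ht A B hA hB
    have e1 : |(γ+1)/2 * A - (γ-3)/2 * B| ≤ |(γ+1)/2 * A| + |(γ-3)/2 * B| := abs_sub _ _
    have e2 : |(γ+1)/2 * A| = (γ+1)/2 * |A| := by
      rw [abs_mul, abs_of_pos (by linarith : (0:ℝ) < (γ+1)/2)]
    have e3 : |(γ-3)/2 * B| = |γ-3|/2 * |B| := by
      rw [abs_mul, abs_div, abs_two]
    have e4 : (γ+1)/2 * |A| ≤ (γ+1)/2 * (2*δ) :=
      mul_le_mul_of_nonneg_left hA (by linarith)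
    have e5 : |γ-3|/2 * |B| ≤ |γ-3|/2 * (2*δ) :=
      mul_le_mul_of_nonneg_left hB (by positivity)
    have e6 : (γ+1)/2 * (2*δ) + |γ-3|/2 * (2*δ) = Cγ * (2*δ) := by
      rw [hCγdef]; ring
    have e7 : Cγ * (2*δ) ≤ ε := by
      calc Cγ * (2*δ) = 2*Cγ*δ := by ring
        _ ≤ 2*Cγ*(ε/(2*Cγ)) := mul_le_mul_of_nonneg_left hδ₀ (by linarith)
        _ = ε := by field_simp
    linarith
  -- lower bounds on l1 l2
  have huB : ∀ t ∈ Set.Icc T₀ (T₀+1), ub ≤ uBack α ub t :=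
    fun t ht => uBack_ge hαnn ub hub.le (le_trans hT₀ ht.1)
  have hl1b : ∀ t ∈ Set.Icc T₀ (T₀+1),
      k - ε ≤ (γ+1)/2 * m1 t x - (γ-3)/2 * m2 t x + uBack α ub t - cb := by
    intro t ht
    have h := hpert t ht (m1 t x) (m2 t x) (hsup1 t ht) (hsup2 t ht)
    have h2 := abs_le.1 h
    have h3 := huB t ht
    rw [hkdef]; linarith [h2.1]
  have hl2b : ∀ t ∈ Set.Icc T₀ (T₀+1),
      k + cb ≤ (γ+1)/2 * m2 t x - (γ-3)/2 * m1 t x + uBack α ub t + cb := by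
    intro t ht
    have h := hpert t ht (m2 t x) (m1 t x) (hsup2 t ht) (hsup1 t ht)
    have h2 := abs_le.1 h
    have h3 := huB t ht
    rw [hkdef]; linarith [h2.1]
  -- abbreviations
  obtain ⟨L1, hL1def⟩ : ∃ f : ℝ → ℝ,
      f = fun s => (γ+1)/2 * m1 s x - (γ-3)/2 * m2 s x + uBack α ub s - cb := ⟨_, rfl⟩
  obtain ⟨L2f, hL2def⟩ : ∃ f : ℝ → ℝ,
      f = fun s => (γ+1)/2 * m2 s x - (γ-3)/2 * m1 s x + uBack α ub s + cb := ⟨_, rfl⟩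
  obtain ⟨L1', hL1'def⟩ : ∃ f : ℝ → ℝ,
      f = fun s => (γ+1)/2 * pdt m1 s x - (γ-3)/2 * pdt m2 s x + α s * uBack α ub s := ⟨_, rfl⟩
  obtain ⟨L2', hL2'def⟩ : ∃ f : ℝ → ℝ,
      f = fun s => (γ+1)/2 * pdt m2 s x - (γ-3)/2 * pdt m1 s x + α s * uBack α ub s := ⟨_, rfl⟩
  have hco : ∀ t ∈ Set.Icc T₀ (T₀+1), 0 < L1 t ∧ 0 < L2f t
      ∧ 3/2*(1/L1 t) + 1/2*(1/L2f t) ≤ 2/k ∧ 1/2*(1/L1 t) + 3/2*(1/L2f t) ≤ 2/k :=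
    fun t ht => coeff_bounds k cb (L1 t) (L2f t) hk hcbpos
      (by rw [hL1def, ← hεdef]; exact hl1b t ht) (by rw [hL2def]; exact hl2b t ht)
  have hL1cont : Continuous L1 := by
    rw [hL1def]
    exact (((continuous_const.mul hc1x).sub (continuous_const.mul hc2x)).add
      (uBack_continuous hαc ub)).sub continuous_const
  have hL2cont : Continuous L2f := by
    rw [hL2def]
    exact (((continuous_const.mul hc2x).sub (continuous_const.mul hc1x)).add
      (uBack_continuous hαc ub)).add continuous_const
  have hL1'cont : Continuous L1' := by
    rw [hL1'def]
    exact (((continuous_const.mul hpdt1c).sub (continuous_const.mul hpdt2c)).add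
      (hαc.mul (uBack_continuous hαc ub)))
  have hL2'cont : Continuous L2' := by
    rw [hL2'def]
    exact (((continuous_const.mul hpdt2c).sub (continuous_const.mul hpdt1c)).add
      (hαc.mul (uBack_continuous hαc ub)))
  have hL1d : ∀ s, HasDerivAt L1 (L1' s) s := by
    intro s
    rw [hL1def, hL1'def]
    exact ((((hd_t hm1 s x).const_mul ((γ+1)/2)).sub
      ((hd_t hm2 s x).const_mul ((γ-3)/2))).add (uBack_hasDerivAt hαc ub s)).sub_const cb
  have hL2d : ∀ s, HasDerivAt L2f (L2' s) s := by
    intro s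
    rw [hL2def, hL2'def]
    exact ((((hd_t hm2 s x).const_mul ((γ+1)/2)).sub
      ((hd_t hm1 s x).const_mul ((γ-3)/2))).add (uBack_hasDerivAt hαc ub s)).add_const cb
  have hL1ne : ∀ s ∈ Set.uIcc T₀ (T₀+1), L1 s ≠ 0 := by
    intro s hs; rw [huIcc] at hs; exact ne_of_gt (hco s hs).1
  have hL2ne : ∀ s ∈ Set.uIcc T₀ (T₀+1), L2f s ≠ 0 := by
    intro s hs; rw [huIcc] at hs; exact ne_of_gt (hco s hs).2.1
  -- periodicity
  have huBper : uBack α ub (T₀+1) = uBack α ub T₀ := by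
    unfold uBack; rw [intAlpha_periodic hαc hαper hαzero T₀]
  have hL1per : L1 (T₀+1) = L1 T₀ := by
    rw [hL1def]; simp only [(hper T₀ x).1, (hper T₀ x).2, huBper]
  have hL2per : L2f (T₀+1) = L2f T₀ := by
    rw [hL2def]; simp only [(hper T₀ x).1, (hper T₀ x).2, huBper]
  -- derivative of the energy
  have hE1 := L2_hasDerivAt hm1 T₀ (T₀+1) x
  have hE2 := L2_hasDerivAt hm2 T₀ (T₀+1) x
  have hE : HasDerivAt (fun y => 1 / 2 * (L2sq T₀ (T₀ + 1) (fun t => m1 t y)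
      + L2sq T₀ (T₀ + 1) (fun t => m2 t y)))
      (1/2 * ((∫ t in T₀..(T₀+1), 2 * m1 t x * pdx m1 t x)
        + ∫ t in T₀..(T₀+1), 2 * m2 t x * pdx m2 t x)) x := (hE1.add hE2).const_mul (1/2)
  rw [hE.deriv]
  -- rewrite integrands using the PDE
  have hPDE1 : ∀ t : ℝ, 2 * m1 t x * pdx m1 t x
      = -((1/L1 t) * (2 * m1 t x * pdt m1 t x))
        + α t * ((1/L1 t) * ((m1 t x + m2 t x) * m1 t x)) := by
    intro t
    have h := (hPDE t x hx).1
    rw [hL1def]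
    simp only at h
    linear_combination (2 * m1 t x) * h
  have hPDE2 : ∀ t : ℝ, 2 * m2 t x * pdx m2 t x
      = -((1/L2f t) * (2 * m2 t x * pdt m2 t x))
        + α t * ((1/L2f t) * ((m1 t x + m2 t x) * m2 t x)) := by
    intro t
    have h := (hPDE t x hx).2
    rw [hL2def]
    simp only at h
    linear_combination (2 * m2 t x) * h
  -- integrability on the interval
  have hInvL1 : ContinuousOn (fun s => 1/L1 s) (Set.uIcc T₀ (T₀+1)) :=
    continuousOn_const.div hL1cont.continuousOn hL1ne
  have hInvL2 : ContinuousOn (fun s => 1/L2f s) (Set.uIcc T₀ (T₀+1)) :=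
    continuousOn_const.div hL2cont.continuousOn hL2ne
  have hY1int : IntervalIntegrable (fun t => (1/L1 t) * (2 * m1 t x * pdt m1 t x))
      volume T₀ (T₀+1) :=
    (hInvL1.mul ((continuous_const.mul hc1x).mul hpdt1c).continuousOn).intervalIntegrable
  have hY2int : IntervalIntegrable (fun t => (1/L2f t) * (2 * m2 t x * pdt m2 t x))
      volume T₀ (T₀+1) :=
    (hInvL2.mul ((continuous_const.mul hc2x).mul hpdt2c).continuousOn).intervalIntegrable
  have hZ1int : IntervalIntegrable
      (fun t => α t * ((1/L1 t) * ((m1 t x + m2 t x) * m1 t x))) volume T₀ (T₀+1) :=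
    ((hαc.continuousOn).mul (hInvL1.mul
      (((hc1x.add hc2x).mul hc1x).continuousOn))).intervalIntegrable
  have hZ2int : IntervalIntegrable
      (fun t => α t * ((1/L2f t) * ((m1 t x + m2 t x) * m2 t x))) volume T₀ (T₀+1) :=
    ((hαc.continuousOn).mul (hInvL2.mul
      (((hc1x.add hc2x).mul hc2x).continuousOn))).intervalIntegrable
  -- split the integrals
  have hI1 : (∫ t in T₀..(T₀+1), 2 * m1 t x * pdx m1 t x)
      = -(∫ t in T₀..(T₀+1), (1/L1 t) * (2 * m1 t x * pdt m1 t x))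
        + ∫ t in T₀..(T₀+1), α t * ((1/L1 t) * ((m1 t x + m2 t x) * m1 t x)) := by
    calc (∫ t in T₀..(T₀+1), 2 * m1 t x * pdx m1 t x)
        = ∫ t in T₀..(T₀+1), (-((1/L1 t) * (2 * m1 t x * pdt m1 t x))
            + α t * ((1/L1 t) * ((m1 t x + m2 t x) * m1 t x))) :=
          intervalIntegral.integral_congr (fun t _ => hPDE1 t)
      _ = (∫ t in T₀..(T₀+1), -((1/L1 t) * (2 * m1 t x * pdt m1 t x)))
            + ∫ t in T₀..(T₀+1), α t * ((1/L1 t) * ((m1 t x + m2 t x) * m1 t x)) :=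
          intervalIntegral.integral_add hY1int.neg hZ1int
      _ = -(∫ t in T₀..(T₀+1), (1/L1 t) * (2 * m1 t x * pdt m1 t x))
            + ∫ t in T₀..(T₀+1), α t * ((1/L1 t) * ((m1 t x + m2 t x) * m1 t x)) := by
          rw [intervalIntegral.integral_neg]
  have hI2 : (∫ t in T₀..(T₀+1), 2 * m2 t x * pdx m2 t x)
      = -(∫ t in T₀..(T₀+1), (1/L2f t) * (2 * m2 t x * pdt m2 t x))
        + ∫ t in T₀..(T₀+1), α t * ((1/L2f t) * ((m1 t x + m2 t x) * m2 t x)) := by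
    calc (∫ t in T₀..(T₀+1), 2 * m2 t x * pdx m2 t x)
        = ∫ t in T₀..(T₀+1), (-((1/L2f t) * (2 * m2 t x * pdt m2 t x))
            + α t * ((1/L2f t) * ((m1 t x + m2 t x) * m2 t x))) :=
          intervalIntegral.integral_congr (fun t _ => hPDE2 t)
      _ = (∫ t in T₀..(T₀+1), -((1/L2f t) * (2 * m2 t x * pdt m2 t x)))
            + ∫ t in T₀..(T₀+1), α t * ((1/L2f t) * ((m1 t x + m2 t x) * m2 t x)) :=
          intervalIntegral.integral_add hY2int.neg hZ2int
      _ = -(∫ t in T₀..(T₀+1), (1/L2f t) * (2 * m2 t x * pdt m2 t x))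
            + ∫ t in T₀..(T₀+1), α t * ((1/L2f t) * ((m1 t x + m2 t x) * m2 t x)) := by
          rw [intervalIntegral.integral_neg]
  -- integration by parts
  have hibp1 : (∫ t in T₀..(T₀+1), (1/L1 t) * (2 * m1 t x * pdt m1 t x))
      = ∫ t in T₀..(T₀+1), (L1' t/(L1 t)^2) * (m1 t x)^2 :=
    ibp_comp T₀ (fun t => m1 t x) (fun t => pdt m1 t x) L1 L1'
      (fun s => hd_t hm1 s x) hc1x hpdt1c hL1d hL1cont hL1'cont hL1ne
      (hper T₀ x).1 hL1per
  have hibp2 : (∫ t in T₀..(T₀+1), (1/L2f t) * (2 * m2 t x * pdt m2 t x))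
      = ∫ t in T₀..(T₀+1), (L2' t/(L2f t)^2) * (m2 t x)^2 :=
    ibp_comp T₀ (fun t => m2 t x) (fun t => pdt m2 t x) L2f L2'
      (fun s => hd_t hm2 s x) hc2x hpdt2c hL2d hL2cont hL2'cont hL2ne
      (hper T₀ x).2 hL2per
  -- bound on the time-derivative coefficients
  have hC₄bd : ∀ t ∈ Set.Icc T₀ (T₀+1),
      |L1' t/(L1 t)^2| ≤ C₄ ∧ |L2' t/(L2f t)^2| ≤ C₄ := by
    intro t ht
    have hmax := hC₄ t ht x hx
    have hpos1 := (hco t ht).1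
    have hpos2 := (hco t ht).2.1
    have h01 : HasDerivAt (fun s => 1 / L1 s) (-(L1' t)/(L1 t)^2) t := by
      have h := HasDerivAt.div (hasDerivAt_const t (1:ℝ)) (hL1d t) (ne_of_gt hpos1)
      exact h.congr_deriv (by ring)
    have h02 : HasDerivAt (fun s => 1 / L2f s) (-(L2' t)/(L2f t)^2) t := by
      have h := HasDerivAt.div (hasDerivAt_const t (1:ℝ)) (hL2d t) (ne_of_gt hpos2)
      exact h.congr_deriv (by ring)
    have efun1 : (fun s : ℝ => 1 / ((γ+1)/2 * m1 s x - (γ-3)/2 * m2 s x + uBack α ub s - cb))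
        = (fun s => 1 / L1 s) := by rw [hL1def]
    have efun2 : (fun s : ℝ => 1 / ((γ+1)/2 * m2 s x - (γ-3)/2 * m1 s x + uBack α ub s + cb))
        = (fun s => 1 / L2f s) := by rw [hL2def]
    have e1 : pdt (fun tt xx => 1 / ((γ+1)/2 * m1 tt xx - (γ-3)/2 * m2 tt xx
        + uBack α ub tt - cb)) t x = -(L1' t)/(L1 t)^2 := by
      show deriv (fun s => 1 / ((γ+1)/2 * m1 s x - (γ-3)/2 * m2 s x + uBack α ub s - cb)) t = _
      rw [efun1]
      exact h01.deriv
    have e2 : pdt (fun tt xx => 1 / ((γ+1)/2 * m2 tt xx - (γ-3)/2 * m1 tt xx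
        + uBack α ub tt + cb)) t x = -(L2' t)/(L2f t)^2 := by
      show deriv (fun s => 1 / ((γ+1)/2 * m2 s x - (γ-3)/2 * m1 s x + uBack α ub s + cb)) t = _
      rw [efun2]
      exact h02.deriv
    constructor
    · have habs : |L1' t/(L1 t)^2| = |pdt (fun tt xx => 1 / ((γ+1)/2 * m1 tt xx
          - (γ-3)/2 * m2 tt xx + uBack α ub tt - cb)) t x| := by
        rw [e1, neg_div, abs_neg]
      rw [habs]
      exact le_trans (le_max_left _ _) hmax
    · have habs : |L2' t/(L2f t)^2| = |pdt (fun tt xx => 1 / ((γ+1)/2 * m2 tt xx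
          - (γ-3)/2 * m1 tt xx + uBack α ub tt + cb)) t x| := by
        rw [e2, neg_div, abs_neg]
      rw [habs]
      exact le_trans (le_max_right _ _) hmax
  -- notation for the L² norms
  rw [hI1, hI2, hibp1, hibp2]
  rw [show (ub - cb)⁻¹ = k⁻¹ by rw [hkdef]]
  -- transport-term estimates
  have hint1 : IntervalIntegrable (fun t => (L1' t/(L1 t)^2) * (m1 t x)^2) volume T₀ (T₀+1) := by
    apply ContinuousOn.intervalIntegrable
    exact ((hL1'cont.continuousOn.div ((hL1cont.continuousOn).pow 2)
      (fun s hs => pow_ne_zero 2 (hL1ne s hs))).mul ((hc1x.pow 2).continuousOn))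
  have hint2 : IntervalIntegrable (fun t => (L2' t/(L2f t)^2) * (m2 t x)^2) volume T₀ (T₀+1) := by
    apply ContinuousOn.intervalIntegrable
    exact ((hL2'cont.continuousOn.div ((hL2cont.continuousOn).pow 2)
      (fun s hs => pow_ne_zero 2 (hL2ne s hs))).mul ((hc2x.pow 2).continuousOn))
  have ha1 : -(∫ t in T₀..(T₀+1), (L1' t/(L1 t)^2) * (m1 t x)^2)
      ≤ C₄ * L2sq T₀ (T₀+1) (fun t => m1 t x) := by
    have hmono : (∫ t in T₀..(T₀+1), -((L1' t/(L1 t)^2) * (m1 t x)^2))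
        ≤ ∫ t in T₀..(T₀+1), C₄ * (m1 t x)^2 := by
      apply intervalIntegral.integral_mono_on hTb hint1.neg
        ((continuous_const.mul (hc1x.pow 2)).intervalIntegrable _ _)
      intro t ht
      have hq := abs_le.1 (hC₄bd t ht).1
      have h2 : -(L1' t/(L1 t)^2) ≤ C₄ := by linarith [hq.1]
      have h3 := mul_le_mul_of_nonneg_right h2 (sq_nonneg (m1 t x))
      simp only [Pi.neg_apply, Pi.mul_apply, Pi.pow_apply]
      linarith [h3]
    rw [intervalIntegral.integral_neg] at hmono
    rw [intervalIntegral.integral_const_mul] at hmono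
    exact hmono
  have ha2 : -(∫ t in T₀..(T₀+1), (L2' t/(L2f t)^2) * (m2 t x)^2)
      ≤ C₄ * L2sq T₀ (T₀+1) (fun t => m2 t x) := by
    have hmono : (∫ t in T₀..(T₀+1), -((L2' t/(L2f t)^2) * (m2 t x)^2))
        ≤ ∫ t in T₀..(T₀+1), C₄ * (m2 t x)^2 := by
      apply intervalIntegral.integral_mono_on hTb hint2.neg
        ((continuous_const.mul (hc2x.pow 2)).intervalIntegrable _ _)
      intro t ht
      have hq := abs_le.1 (hC₄bd t ht).2
      have h2 : -(L2' t/(L2f t)^2) ≤ C₄ := by linarith [hq.1]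
      have h3 := mul_le_mul_of_nonneg_right h2 (sq_nonneg (m2 t x))
      simp only [Pi.neg_apply, Pi.mul_apply, Pi.pow_apply]
      linarith [h3]
    rw [intervalIntegral.integral_neg] at hmono
    rw [intervalIntegral.integral_const_mul] at hmono
    exact hmono
  -- source-term estimate
  have hb : (∫ t in T₀..(T₀+1), α t * ((1/L1 t) * ((m1 t x + m2 t x) * m1 t x)))
      + (∫ t in T₀..(T₀+1), α t * ((1/L2f t) * ((m1 t x + m2 t x) * m2 t x)))
      ≤ 2*C₃/k * (L2sq T₀ (T₀+1) (fun t => m1 t x) + L2sq T₀ (T₀+1) (fun t => m2 t x)) := by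
    have hZsum : (∫ t in T₀..(T₀+1), α t * ((1/L1 t) * ((m1 t x + m2 t x) * m1 t x)))
        + (∫ t in T₀..(T₀+1), α t * ((1/L2f t) * ((m1 t x + m2 t x) * m2 t x)))
        = ∫ t in T₀..(T₀+1), (α t * ((1/L1 t) * ((m1 t x + m2 t x) * m1 t x))
            + α t * ((1/L2f t) * ((m1 t x + m2 t x) * m2 t x))) :=
      (intervalIntegral.integral_add hZ1int hZ2int).symm
    rw [hZsum]
    have hmono : (∫ t in T₀..(T₀+1), (α t * ((1/L1 t) * ((m1 t x + m2 t x) * m1 t x))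
          + α t * ((1/L2f t) * ((m1 t x + m2 t x) * m2 t x))))
        ≤ ∫ t in T₀..(T₀+1), 2*C₃/k * ((m1 t x)^2 + (m2 t x)^2) := by
      apply intervalIntegral.integral_mono_on hTb (hZ1int.add hZ2int)
        ((continuous_const.mul ((hc1x.pow 2).add (hc2x.pow 2))).intervalIntegrable _ _)
      intro t ht
      obtain ⟨hp1, hp2, hq1, hq2⟩ := hco t ht
      have halg := alg_main k C₃ (1/L1 t) (1/L2f t) (α t) (m1 t x) (m2 t x)
        (by positivity) (by positivity) hk hq1 hq2 (hC₃ t (le_trans hT₀ ht.1)).1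
      have h2 := mul_le_mul_of_nonneg_left halg (by norm_num : (0:ℝ) ≤ 2)
      simp only [Pi.mul_apply, Pi.add_apply, Pi.pow_apply]
      ring_nf at h2 ⊢
      linarith [h2]
    calc (∫ t in T₀..(T₀+1), (α t * ((1/L1 t) * ((m1 t x + m2 t x) * m1 t x))
          + α t * ((1/L2f t) * ((m1 t x + m2 t x) * m2 t x))))
        ≤ ∫ t in T₀..(T₀+1), 2*C₃/k * ((m1 t x)^2 + (m2 t x)^2) := hmono
      _ = 2*C₃/k * ∫ t in T₀..(T₀+1), ((m1 t x)^2 + (m2 t x)^2) :=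
          intervalIntegral.integral_const_mul _ _
      _ = 2*C₃/k * (L2sq T₀ (T₀+1) (fun t => m1 t x) + L2sq T₀ (T₀+1) (fun t => m2 t x)) := by
          rw [intervalIntegral.integral_add (f := fun t => m1 t x ^ 2) (g := fun t => m2 t x ^ 2) ((hc1x.pow 2).intervalIntegrable _ _)
            ((hc2x.pow 2).intervalIntegrable _ _)]
          rfl
  -- final combination
  have heq : 1/2 * (C₄ + 2 * k⁻¹ * C₃)
      * (L2sq T₀ (T₀+1) (fun t => m1 t x) + L2sq T₀ (T₀+1) (fun t => m2 t x))
      = 1/2 * (C₄ * L2sq T₀ (T₀+1) (fun t => m1 t x))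
        + 1/2 * (C₄ * L2sq T₀ (T₀+1) (fun t => m2 t x))
        + 1/2 * (2*C₃/k * (L2sq T₀ (T₀+1) (fun t => m1 t x)
            + L2sq T₀ (T₀+1) (fun t => m2 t x))) := by
    field_simp
  linarith [ha1, ha2, hb, heq]
end
end
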